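/- arXiv:2408.01183 — 6 statements merged into one kernel-verified Lean document; each statement's English description precedes it below -/
import Mathlib

section
/- Let N ≥ 1 and let c₀ : ℤ^N → ℂ be any function, and set 𝒵 = {ξ ∈ ℤ^N : c₀(ξ) ∈ ℤ}. Then the following three conditions are equivalent: (i) there exist C > 0 and M ∈ ℕ such that |τ + c₀(ξ)| ≥ C(1+|ξ|)^{-M} for every τ ∈ ℤ and every ξ ∈ ℤ^N \ 𝒵; (ii) there exist C' > 0 and M' ∈ ℕ such that |1 − e^{−2πi c₀(ξ)}| ≥ C'(1+|ξ|)^{-M'} for every ξ ∈ ℤ^N \ 𝒵; (iii) there exist C'' > 0 and M'' ∈ ℕ such that |e^{2πi c₀(ξ)} − 1| ≥ C''(1+|ξ|)^{-M''} for every ξ ∈ ℤ^N \ 𝒵. -/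
/-!
Write `z = c₀(ξ)`. The three conditions are polynomial lower bounds for the distance `d(z)` from `z`
to `ℤ`, for `‖1 - e^{-2πiz}‖` and for `‖e^{2πiz} - 1‖`. Each of these quantities dominates a fixed
positive multiple of `min 1` of the others, and because `(1 + |ξ|)^M ≥ 1` such a comparison turns
a bound `C (1 + |ξ|)^{-M}` for one into a bound with the same `M` for the other.

Translating `z` by an integer so that `|Re z| ≤ 1/2` puts `w = -2πiz` in the strip `|Im w| ≤ π`,
where `exp w = 1` only at `w = 0`; there `‖exp w - 1‖` is comparable to `min 1 ‖w‖` (Taylor near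
`0`, `|exp (Re w)| ≫ 1` or `≪ 1` far out, compactness in between), which compares `d(z)` with
`‖1 - e^{-2πiz}‖`. The last two quantities differ by the factor `e^{2πiz}`, which matters only when
it is small, and then `‖e^{2πiz} - 1‖ ≥ 1/2`.
-/

/-- Euclidean norm of a lattice point `ξ ∈ ℤ^N`. -/
noncomputable def znorm {N : ℕ} (ξ : Fin N → ℤ) : ℝ :=
  Real.sqrt (∑ i, ((ξ i : ℝ)) ^ 2)

open Complex Metric Set
open scoped Real

theorem znorm_nonneg {N : ℕ} (ξ : Fin N → ℤ) : 0 ≤ znorm ξ := Real.sqrt_nonneg _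

def HasPolyLowerBoundOn {N : ℕ} (S : Set (Fin N → ℤ)) (f : (Fin N → ℤ) → ℝ) : Prop :=
  ∃ C : ℝ, 0 < C ∧ ∃ M : ℕ, ∀ ξ ∈ S, C / (1 + znorm ξ) ^ M ≤ f ξ

theorem HasPolyLowerBoundOn.of_mul_min_one_le {N : ℕ} {S : Set (Fin N → ℤ)}
    {f g : (Fin N → ℤ) → ℝ} (hg : HasPolyLowerBoundOn S g) {k : ℝ} (hk : 0 < k)
    (hfg : ∀ ξ ∈ S, k * min 1 (g ξ) ≤ f ξ) : HasPolyLowerBoundOn S f := by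
  obtain ⟨C, hC, M, hCg⟩ := hg
  refine ⟨k * min 1 C, by positivity, M, fun ξ hξ => ?_⟩
  have hP : 1 ≤ (1 + znorm ξ) ^ M := one_le_pow₀ (by linarith [znorm_nonneg ξ])
  calc k * min 1 C / (1 + znorm ξ) ^ M = k * (min 1 C / (1 + znorm ξ) ^ M) := mul_div_assoc _ _ _
    _ ≤ k * min 1 (g ξ) := by
        gcongr
        refine le_min (div_le_one_of_le₀ ((min_le_left _ _).trans hP) (by positivity)) ?_
        exact (div_le_div_of_nonneg_right (min_le_right _ _) (by positivity)).trans (hCg ξ hξ)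
    _ ≤ f ξ := hfg ξ hξ

theorem min_one_norm_exp_sub_one_le (w : ℂ) : min 1 ‖cexp w - 1‖ ≤ 2 * ‖w‖ := by
  rcases le_total ‖w‖ 1 with hw | hw
  · exact (min_le_right _ _).trans (norm_exp_sub_one_le hw)
  · linarith [min_le_left 1 ‖cexp w - 1‖]

theorem norm_div_two_le_norm_exp_sub_one {w : ℂ} (hw : ‖w‖ ≤ 1 / 2) :
    ‖w‖ / 2 ≤ ‖cexp w - 1‖ := by
  have hquad := norm_exp_sub_one_sub_id_le (hw.trans (by norm_num))
  have htri : ‖w‖ ≤ ‖cexp w - 1‖ + ‖cexp w - 1 - w‖ := by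
    simpa using norm_sub_le (cexp w - 1) (cexp w - 1 - w)
  nlinarith [norm_nonneg w]

theorem half_le_abs_exp_sub_one {x : ℝ} (hx : 1 ≤ |x|) : 1 / 2 ≤ |Real.exp x - 1| := by
  have h2 : 2 ≤ Real.exp 1 := by linarith [Real.add_one_le_exp 1]
  rcases le_abs'.mp hx with hneg | hpos
  · have hle : Real.exp x ≤ (Real.exp 1)⁻¹ := by
      rw [← Real.exp_neg]; exact Real.exp_le_exp.mpr (by linarith)
    have : (Real.exp 1)⁻¹ ≤ 1 / 2 := by rw [inv_eq_one_div]; gcongr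
    rw [abs_sub_comm, abs_of_pos (by linarith)]; linarith
  · rw [abs_of_pos (by linarith [Real.add_one_le_exp x])]; linarith [Real.add_one_le_exp x]

theorem norm_exp_sub_one_pos_of_abs_im_le {w : ℂ} (hw : w ≠ 0) (him : |w.im| ≤ π) :
    0 < ‖cexp w - 1‖ := by
  rw [norm_pos_iff, sub_ne_zero]
  intro hexp
  obtain ⟨n, rfl⟩ := exp_eq_one_iff.mp hexp
  have hn : n = 0 := by
    have : |(n : ℝ)| * (2 * π) ≤ π := by simpa [abs_mul, abs_of_pos Real.pi_pos] using him
    have : |(n : ℝ)| < 1 := by nlinarith [Real.pi_pos]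
    exact Int.abs_lt_one_iff.mp (by exact_mod_cast this)
  simp [hn] at hw

theorem exists_pos_mul_min_one_norm_le_norm_exp_sub_one :
    ∃ c > 0, ∀ w : ℂ, |w.im| ≤ π → c * min 1 ‖w‖ ≤ ‖cexp w - 1‖ := by
  set K : Set ℂ := (closedBall 0 5 \ ball 0 (1 / 2)) ∩ {w | |w.im| ≤ π}
  have hK : IsCompact K :=
    ((isCompact_closedBall 0 5).diff isOpen_ball).inter_right
      (isClosed_le (continuous_abs.comp continuous_im) continuous_const)
  obtain ⟨m, hm, hmK⟩ := hK.exists_forall_le' (a := 0)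
    (continuous_norm.comp (continuous_exp.sub continuous_const)).continuousOn
    fun w ⟨⟨_, hw⟩, him⟩ => norm_exp_sub_one_pos_of_abs_im_le
      (by rintro rfl; simp at hw) him
  refine ⟨min (1 / 2) m, by positivity, fun w him => ?_⟩
  have hc : min (1 / 2) m * min 1 ‖w‖ ≤ min (1 / 2) m :=
    mul_le_of_le_one_right (by positivity) (min_le_left _ _)
  rcases le_or_gt ‖w‖ (1 / 2) with hsmall | hw
  · calc min (1 / 2) m * min 1 ‖w‖ ≤ 1 / 2 * ‖w‖ := by gcongr <;> simp
      _ ≤ ‖cexp w - 1‖ := by linarith [norm_div_two_le_norm_exp_sub_one hsmall]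
  rcases le_or_gt ‖w‖ 5 with hmid | hlarge
  · refine hc.trans ((min_le_right _ _).trans (hmK w ⟨⟨?_, ?_⟩, him⟩))
    · simpa using hmid
    · simpa using hw.le
  · have hre : 1 ≤ |w.re| := by
      linarith [norm_le_abs_re_add_abs_im w, Real.pi_lt_four]
    calc min (1 / 2) m * min 1 ‖w‖ ≤ 1 / 2 := hc.trans (min_le_left _ _)
      _ ≤ |Real.exp w.re - 1| := half_le_abs_exp_sub_one hre
      _ = |‖cexp w‖ - ‖(1 : ℂ)‖| := by rw [norm_exp, norm_one]
      _ ≤ ‖cexp w - 1‖ := abs_norm_sub_norm_le _ _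

theorem exp_neg_two_pi_I_mul_sub_intCast (z : ℂ) (n : ℤ) :
    cexp (-(2 * π) * I * (z - n)) = cexp (-(2 * π) * I * z) := by
  rw [show -(2 * π) * I * (z - n) = -(2 * π) * I * z + n * (2 * π * I) by ring]
  exact exp_periodic.int_mul n _

theorem norm_neg_two_pi_I_mul (z : ℂ) : ‖-(2 * π) * I * z‖ = 2 * π * ‖z‖ := by
  simp [abs_of_pos Real.pi_pos]

theorem le_infDist_range_intCast_iff {z : ℂ} {r : ℝ} :
    r ≤ infDist z (range ((↑) : ℤ → ℂ)) ↔ ∀ τ : ℤ, r ≤ ‖(τ : ℂ) + z‖ := by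
  rw [le_infDist (range_nonempty _), forall_mem_range]
  refine ⟨fun h τ => ?_, fun h n => ?_⟩
  · simpa [dist_eq_norm, sub_eq_neg_add] using h (-τ)
  · simpa [dist_eq_norm, sub_eq_neg_add] using h (-n)

theorem hasPolyLowerBoundOn_infDist_range_intCast_iff {N : ℕ} {S : Set (Fin N → ℤ)}
    {z : (Fin N → ℤ) → ℂ} :
    HasPolyLowerBoundOn S (fun ξ => infDist (z ξ) (range ((↑) : ℤ → ℂ))) ↔
      ∃ C : ℝ, 0 < C ∧ ∃ M : ℕ, ∀ τ : ℤ, ∀ ξ ∈ S, C / (1 + znorm ξ) ^ M ≤ ‖(τ : ℂ) + z ξ‖ := by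
  simp only [HasPolyLowerBoundOn, le_infDist_range_intCast_iff]
  exact exists_congr fun C => and_congr_right fun _ => exists_congr fun M =>
    ⟨fun h τ ξ hξ => h ξ hξ τ, fun h ξ hξ τ => h τ ξ hξ⟩

theorem min_one_norm_one_sub_exp_le_infDist (z : ℂ) :
    1 / (4 * π) * min 1 ‖1 - cexp (-(2 * π) * I * z)‖ ≤ infDist z (range ((↑) : ℤ → ℂ)) := by
  rw [le_infDist (range_nonempty _), forall_mem_range]
  intro n
  have h := min_one_norm_exp_sub_one_le (-(2 * π) * I * (z - n))
  rw [exp_neg_two_pi_I_mul_sub_intCast, norm_sub_rev, norm_neg_two_pi_I_mul] at h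
  rw [dist_eq_norm, div_mul_eq_mul_div, div_le_iff₀ (by positivity)]
  linarith

theorem exists_pos_mul_min_one_infDist_le_norm_one_sub_exp :
    ∃ c > 0, ∀ z : ℂ,
      c * min 1 (infDist z (range ((↑) : ℤ → ℂ))) ≤ ‖1 - cexp (-(2 * π) * I * z)‖ := by
  obtain ⟨c, hc, hlow⟩ := exists_pos_mul_min_one_norm_le_norm_exp_sub_one
  refine ⟨c, hc, fun z => ?_⟩
  set n := round z.re
  set w := -(2 * π) * I * (z - n)
  have him : |w.im| ≤ π := by
    have : w.im = -(2 * π * (z.re - n)) := by simp [w]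
    rw [this, abs_neg, abs_mul, abs_of_pos Real.two_pi_pos]
    nlinarith [abs_sub_round z.re, Real.pi_pos]
  have hdist : infDist z (range ((↑) : ℤ → ℂ)) ≤ ‖w‖ :=
    calc infDist z (range ((↑) : ℤ → ℂ)) ≤ ‖z - n‖ :=
          (infDist_le_dist_of_mem (mem_range_self n)).trans_eq (dist_eq_norm _ _)
      _ ≤ ‖w‖ := by
          rw [norm_neg_two_pi_I_mul]
          nlinarith [norm_nonneg (z - n), Real.pi_gt_three]
  calc c * min 1 (infDist z (range ((↑) : ℤ → ℂ))) ≤ c * min 1 ‖w‖ := by gcongr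
    _ ≤ ‖cexp w - 1‖ := hlow w him
    _ = ‖1 - cexp (-(2 * π) * I * z)‖ := by rw [exp_neg_two_pi_I_mul_sub_intCast, norm_sub_rev]

theorem half_mul_min_one_norm_one_sub_inv_le {q : ℂ} (hq : q ≠ 0) :
    1 / 2 * min 1 ‖1 - q⁻¹‖ ≤ ‖q - 1‖ := by
  rcases le_or_gt ‖q‖ (1 / 2) with hsmall | hlarge
  · have : 1 - ‖q‖ ≤ ‖q - 1‖ := by
      simpa [norm_sub_rev] using norm_sub_norm_le (1 : ℂ) q
    nlinarith [min_le_left 1 ‖1 - q⁻¹‖]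
  · calc 1 / 2 * min 1 ‖1 - q⁻¹‖ ≤ ‖q‖ * ‖1 - q⁻¹‖ := by
          gcongr
          exact min_le_right _ _
      _ = ‖q - 1‖ := by rw [← norm_mul, mul_sub, mul_one, mul_inv_cancel₀ hq]

theorem exp_neg_two_pi_I_mul (z : ℂ) : cexp (-(2 * π) * I * z) = (cexp (2 * π * I * z))⁻¹ := by
  rw [← exp_neg, neg_mul, neg_mul]

theorem half_mul_min_one_norm_one_sub_exp_le (z : ℂ) :
    1 / 2 * min 1 ‖1 - cexp (-(2 * π) * I * z)‖ ≤ ‖cexp (2 * π * I * z) - 1‖ := by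
  rw [exp_neg_two_pi_I_mul]
  exact half_mul_min_one_norm_one_sub_inv_le (exp_ne_zero _)

theorem half_mul_min_one_norm_exp_sub_one_le (z : ℂ) :
    1 / 2 * min 1 ‖cexp (2 * π * I * z) - 1‖ ≤ ‖1 - cexp (-(2 * π) * I * z)‖ := by
  rw [exp_neg_two_pi_I_mul, norm_sub_rev 1, norm_sub_rev _ 1]
  simpa only [inv_inv] using half_mul_min_one_norm_one_sub_inv_le (inv_ne_zero (exp_ne_zero _))

theorem stmt_0_general (N : ℕ) (c0 : (Fin N → ℤ) → ℂ) :
    ((∃ C : ℝ, 0 < C ∧ ∃ M : ℕ, ∀ τ : ℤ, ∀ ξ : Fin N → ℤ, (¬ ∃ n : ℤ, c0 ξ = n) →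
        C / (1 + znorm ξ) ^ M ≤ ‖(τ : ℂ) + c0 ξ‖) ↔
      (∃ C' : ℝ, 0 < C' ∧ ∃ M' : ℕ, ∀ ξ : Fin N → ℤ, (¬ ∃ n : ℤ, c0 ξ = n) →
        C' / (1 + znorm ξ) ^ M' ≤
          ‖1 - Complex.exp (-(2 * (Real.pi : ℂ)) * Complex.I * c0 ξ)‖))
    ∧
    ((∃ C' : ℝ, 0 < C' ∧ ∃ M' : ℕ, ∀ ξ : Fin N → ℤ, (¬ ∃ n : ℤ, c0 ξ = n) →
        C' / (1 + znorm ξ) ^ M' ≤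
          ‖1 - Complex.exp (-(2 * (Real.pi : ℂ)) * Complex.I * c0 ξ)‖) ↔
      (∃ C'' : ℝ, 0 < C'' ∧ ∃ M'' : ℕ, ∀ ξ : Fin N → ℤ, (¬ ∃ n : ℤ, c0 ξ = n) →
        C'' / (1 + znorm ξ) ^ M'' ≤
          ‖Complex.exp (2 * (Real.pi : ℂ) * Complex.I * c0 ξ) - 1‖)) := by
  have hdist :=
    hasPolyLowerBoundOn_infDist_range_intCast_iff (S := {ξ | ¬ ∃ n : ℤ, c0 ξ = n}) (z := c0)
  obtain ⟨c, hc, hlow⟩ := exists_pos_mul_min_one_infDist_le_norm_one_sub_exp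
  refine ⟨⟨fun h => ?_, fun h => hdist.mp ?_⟩, ⟨fun h => ?_, fun h => ?_⟩⟩
  · exact (hdist.mpr h).of_mul_min_one_le hc fun ξ _ => hlow (c0 ξ)
  · exact HasPolyLowerBoundOn.of_mul_min_one_le h (by positivity) fun ξ _ =>
      min_one_norm_one_sub_exp_le_infDist (c0 ξ)
  · exact HasPolyLowerBoundOn.of_mul_min_one_le h one_half_pos fun ξ _ =>
      half_mul_min_one_norm_one_sub_exp_le (c0 ξ)
  · exact HasPolyLowerBoundOn.of_mul_min_one_le h one_half_pos fun ξ _ =>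
      half_mul_min_one_norm_exp_sub_one_le (c0 ξ)

/-- Equivalence of the three diophantine conditions (Lemma on `c₀`). -/
theorem stmt_0 (N : ℕ) (hN : 1 ≤ N) (c0 : (Fin N → ℤ) → ℂ) :
    ((∃ C : ℝ, 0 < C ∧ ∃ M : ℕ, ∀ τ : ℤ, ∀ ξ : Fin N → ℤ, (¬ ∃ n : ℤ, c0 ξ = n) →
        C / (1 + znorm ξ) ^ M ≤ ‖(τ : ℂ) + c0 ξ‖) ↔
      (∃ C' : ℝ, 0 < C' ∧ ∃ M' : ℕ, ∀ ξ : Fin N → ℤ, (¬ ∃ n : ℤ, c0 ξ = n) →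
        C' / (1 + znorm ξ) ^ M' ≤
          ‖1 - Complex.exp (-(2 * (Real.pi : ℂ)) * Complex.I * c0 ξ)‖))
    ∧
    ((∃ C' : ℝ, 0 < C' ∧ ∃ M' : ℕ, ∀ ξ : Fin N → ℤ, (¬ ∃ n : ℤ, c0 ξ = n) →
        C' / (1 + znorm ξ) ^ M' ≤
          ‖1 - Complex.exp (-(2 * (Real.pi : ℂ)) * Complex.I * c0 ξ)‖) ↔
      (∃ C'' : ℝ, 0 < C'' ∧ ∃ M'' : ℕ, ∀ ξ : Fin N → ℤ, (¬ ∃ n : ℤ, c0 ξ = n) →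
        C'' / (1 + znorm ξ) ^ M'' ≤
          ‖Complex.exp (2 * (Real.pi : ℂ) * Complex.I * c0 ξ) - 1‖)) :=
  stmt_0_general N c0
end

section
/- Let κ ≥ 0, M ≥ 0, K ≥ 0, 0 < L ≤ 2π and t ∈ ℝ. Let a, b : ℝ → ℝ be continuous with |b(τ)| ≤ κ for all τ ∈ [t, t+2π], and let g : ℝ → ℂ be continuous with |g(τ)| ≤ M for all τ ∈ [t, t+2π]. Assume that for every open interval I ⊂ [t, t+2π] with length |I| ≥ L there exists s ∈ I with ∫_s^t b(τ) dτ ≤ K. Then |∫₀^{2π} e^{i ∫_t^{t+s}(a(τ) + i b(τ)) dτ} g(t+s) ds| ≤ 2π e^{κL + K} M. -/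
/-!
The modulus of `exp (i ∫_t^{t+s} (a + i b))` is `exp (-∫_t^{t+s} b)`, so it suffices to bound
`-∫_t^x b` uniformly for `x ∈ [t, t+2π]`. Every such `x` lies in a window of length `L` inside
`[t, t+2π]`, which contains a point `s` with `∫_s^t b ≤ K`; on the remaining stretch from `s` to `x`,
of length at most `L`, the bound `|b| ≤ κ` contributes at most `κL`.
-/

open Complex Set MeasureTheory intervalIntegral

lemma norm_cexp_I_mul_integral {a b : ℝ → ℝ} {u v : ℝ}
    (ha : IntervalIntegrable a volume u v)
    (hb : IntervalIntegrable b volume u v) :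
    ‖cexp (I * ∫ τ in u..v, ((a τ : ℂ) + I * (b τ : ℂ)))‖ = Real.exp (-∫ τ in u..v, b τ) := by
  have haC : IntervalIntegrable (fun τ => (a τ : ℂ)) volume u v :=
    ⟨ha.1.ofReal, ha.2.ofReal⟩
  have hbC : IntervalIntegrable (fun τ => (b τ : ℂ)) volume u v :=
    ⟨hb.1.ofReal, hb.2.ofReal⟩
  rw [integral_add haC (hbC.const_mul I), intervalIntegral.integral_const_mul,
    intervalIntegral.integral_ofReal, intervalIntegral.integral_ofReal, norm_exp]
  simp

lemma exists_abs_sub_le_of_forall_exists_mem_Ioo {P : ℝ → Prop} {L t T x : ℝ}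
    (hL : 0 ≤ L) (hLT : t + L ≤ T)
    (hP : ∀ p q : ℝ, t ≤ p → q ≤ T → L ≤ q - p → ∃ s ∈ Ioo p q, P s)
    (hx : x ∈ Icc t T) :
    ∃ s ∈ Icc t T, |x - s| ≤ L ∧ P s := by
  have hwindow : max t (x - L) + L ≤ T := by
    rw [← max_add_add_right, sub_add_cancel]
    exact max_le hLT hx.2
  obtain ⟨s, ⟨hps, hsq⟩, hs⟩ :=
    hP (max t (x - L)) (max t (x - L) + L) (le_max_left _ _) hwindow (by linarith)
  refine ⟨s, ⟨(le_max_left _ _).trans hps.le, hsq.le.trans hwindow⟩, abs_le.2 ⟨?_, ?_⟩, hs⟩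
  · linarith [max_le hx.1 (sub_le_self x hL)]
  · linarith [le_max_right t (x - L)]

lemma neg_integral_le_of_forall_exists_mem_Ioo {b : ℝ → ℝ} {κ K L t T x : ℝ}
    (hb : IntervalIntegrable b volume t T) (hκ : 0 ≤ κ)
    (hbκ : ∀ τ ∈ Icc t T, |b τ| ≤ κ) (hL : 0 ≤ L) (hLT : t + L ≤ T)
    (hosc : ∀ p q : ℝ, t ≤ p → q ≤ T → L ≤ q - p → ∃ s ∈ Ioo p q, (∫ τ in s..t, b τ) ≤ K)
    (hx : x ∈ Icc t T) :
    -∫ τ in t..x, b τ ≤ κ * L + K := by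
  obtain ⟨s, hs, hxs, hsK⟩ := exists_abs_sub_le_of_forall_exists_mem_Ioo hL hLT hosc hx
  have hint : ∀ {u v : ℝ}, u ∈ Icc t T → v ∈ Icc t T → IntervalIntegrable b volume u v :=
    fun hu hv => hb.mono_set <|
      uIcc_subset_uIcc (mem_uIcc_of_le hu.1 hu.2) (mem_uIcc_of_le hv.1 hv.2)
  have hts : t ∈ Icc t T := ⟨le_rfl, by linarith⟩
  have hstretch : |∫ τ in x..s, b τ| ≤ κ * L := by
    have hsub : uIoc x s ⊆ Icc t T := uIoc_subset_uIcc.trans (uIcc_subset_Icc hx hs)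
    calc |∫ τ in x..s, b τ| ≤ κ * |s - x| := by
          simpa only [Real.norm_eq_abs] using
            norm_integral_le_of_norm_le_const (f := b) fun τ hτ => (hbκ τ (hsub hτ) : ‖b τ‖ ≤ κ)
      _ ≤ κ * L := by rw [abs_sub_comm]; exact mul_le_mul_of_nonneg_left hxs hκ
  calc -∫ τ in t..x, b τ = (∫ τ in s..t, b τ) + ∫ τ in x..s, b τ := by
        rw [← integral_symm, add_comm, integral_add_adjacent_intervals (hint hx hs) (hint hs hts)]
    _ ≤ K + κ * L := add_le_add hsK ((le_abs_self _).trans hstretch)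
    _ = κ * L + K := add_comm _ _

theorem stmt_10_general (κ M K L t : ℝ)
    (hκ : 0 ≤ κ) (hL0 : 0 < L) (hL2 : L ≤ 2 * Real.pi)
    (a b : ℝ → ℝ) (ha : Continuous a) (hb : Continuous b)
    (hbκ : ∀ τ ∈ Set.Icc t (t + 2 * Real.pi), |b τ| ≤ κ)
    (g : ℝ → ℂ)
    (hgM : ∀ τ ∈ Set.Icc t (t + 2 * Real.pi), ‖g τ‖ ≤ M)
    (hosc : ∀ p q : ℝ, t ≤ p → q ≤ t + 2 * Real.pi → L ≤ q - p →
      ∃ s ∈ Set.Ioo p q, (∫ τ in s..t, b τ) ≤ K) :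
    ‖∫ s in (0:ℝ)..(2 * Real.pi),
        Complex.exp (Complex.I *
          ∫ τ in t..(t + s), ((a τ : ℂ) + Complex.I * (b τ : ℂ))) * g (t + s)‖
      ≤ 2 * Real.pi * Real.exp (κ * L + K) * M := by
  have hπ : (0:ℝ) ≤ 2 * Real.pi := by positivity
  have hpointwise : ∀ s ∈ uIoc (0:ℝ) (2 * Real.pi),
      ‖cexp (I * ∫ τ in t..(t + s), ((a τ : ℂ) + I * (b τ : ℂ))) * g (t + s)‖
        ≤ Real.exp (κ * L + K) * M := by
    intro s hs
    rw [uIoc_of_le hπ] at hs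
    have hts : t + s ∈ Icc t (t + 2 * Real.pi) := ⟨by linarith [hs.1], by linarith [hs.2]⟩
    rw [norm_mul, norm_cexp_I_mul_integral (ha.intervalIntegrable _ _) (hb.intervalIntegrable _ _)]
    exact mul_le_mul
      (Real.exp_le_exp.2 (neg_integral_le_of_forall_exists_mem_Ioo (hb.intervalIntegrable _ _)
        hκ hbκ hL0.le (by linarith) hosc hts))
      (hgM _ hts) (norm_nonneg _) (Real.exp_nonneg _)
  calc _ ≤ Real.exp (κ * L + K) * M * |2 * Real.pi - 0| :=
        norm_integral_le_of_norm_le_const hpointwise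
    _ = 2 * Real.pi * Real.exp (κ * L + K) * M := by
        rw [sub_zero, abs_of_nonneg hπ]; ring

/-- Key estimate for the forward integral representation: if on every open subinterval of
`[t, t+2π]` of length at least `L` the primitive of `b` comes back within `K` of its value at
`t`, then the oscillatory integral is bounded by `2π e^{κL+K} M`. -/
theorem stmt_10 (κ M K L t : ℝ)
    (hκ : 0 ≤ κ) (hM : 0 ≤ M) (hK : 0 ≤ K) (hL0 : 0 < L) (hL2 : L ≤ 2 * Real.pi)
    (a b : ℝ → ℝ) (ha : Continuous a) (hb : Continuous b)
    (hbκ : ∀ τ ∈ Set.Icc t (t + 2 * Real.pi), |b τ| ≤ κ)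
    (g : ℝ → ℂ) (hg : Continuous g)
    (hgM : ∀ τ ∈ Set.Icc t (t + 2 * Real.pi), ‖g τ‖ ≤ M)
    (hosc : ∀ p q : ℝ, t ≤ p → q ≤ t + 2 * Real.pi → L ≤ q - p →
      ∃ s ∈ Set.Ioo p q, (∫ τ in s..t, b τ) ≤ K) :
    ‖∫ s in (0:ℝ)..(2 * Real.pi),
        Complex.exp (Complex.I *
          ∫ τ in t..(t + s), ((a τ : ℂ) + Complex.I * (b τ : ℂ))) * g (t + s)‖
      ≤ 2 * Real.pi * Real.exp (κ * L + K) * M :=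
  stmt_10_general κ M K L t hκ hL0 hL2 a b ha hb hbκ g hgM hosc
end

section
/- Let κ ≥ 0, M ≥ 0, K ≥ 0, 0 < L ≤ 2π and t ∈ ℝ. Let a, b : ℝ → ℝ be continuous with |b(τ)| ≤ κ for all τ ∈ [t−2π, t], and let g : ℝ → ℂ be continuous with |g(τ)| ≤ M for all τ ∈ [t−2π, t]. Assume that for every open interval I ⊂ [t−2π, t] with length |I| ≥ L there exists s ∈ I with ∫_s^t b(τ) dτ ≤ K. Then |∫₀^{2π} e^{i ∫_t^{t−s}(a(τ) + i b(τ)) dτ} g(t−s) ds| ≤ 2π e^{κL + K} M. -/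
open Set

/-! The modulus of the integrand is `e^{∫_{t-s}^t b} |g(t-s)|`. Every point `t - s` of `[t-2π, t]`
lies in a window of length `L` inside `[t-2π, t]`, and that window contains a point `s'` with
`∫_{s'}^t b ≤ K`; since `|b| ≤ κ`, moving from `s'` to `t - s` changes the primitive by at most
`κL`. Hence the integrand is bounded by `e^{κL+K} M` on an interval of length `2π`. -/

lemma Complex.norm_exp_I_mul_intervalIntegral {f : ℝ → ℂ} {x y : ℝ}
    (hf : IntervalIntegrable f MeasureTheory.volume x y) :
    ‖Complex.exp (Complex.I * ∫ τ in x..y, f τ)‖ = Real.exp (∫ τ in y..x, (f τ).im) := by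
  rw [Complex.norm_exp, Complex.I_mul_re,
    intervalIntegral.integral_symm (f := fun τ ↦ (f τ).im)]
  exact congrArg (Real.exp ∘ Neg.neg) (intervalIntegral.intervalIntegral_im hf).symm

lemma exists_window_mem {u t L x : ℝ} (hL0 : 0 ≤ L) (hL : L ≤ t - u) (hx : x ∈ Icc u t) :
    ∃ p, u ≤ p ∧ p + L ≤ t ∧ x ∈ Icc p (p + L) := by
  refine ⟨min x (t - L), le_min hx.1 (by linarith), ?_, min_le_left _ _, ?_⟩
  · linarith [min_le_right x (t - L)]
  · rcases le_total x (t - L) with h | h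
    · rw [min_eq_left h]; linarith
    · rw [min_eq_right h]; linarith [hx.2]

lemma intervalIntegral_le_of_abs_le_of_near {b : ℝ → ℝ} (hb : Continuous b) {κ L K x y t : ℝ}
    (hκ : 0 ≤ κ) (hbκ : ∀ τ ∈ uIcc x y, |b τ| ≤ κ) (hxy : |y - x| ≤ L)
    (hy : ∫ τ in y..t, b τ ≤ K) :
    ∫ τ in x..t, b τ ≤ κ * L + K := by
  have hxy_bound : ‖∫ τ in x..y, b τ‖ ≤ κ * L :=
    calc ‖∫ τ in x..y, b τ‖ ≤ κ * |y - x| :=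
          intervalIntegral.norm_integral_le_of_norm_le_const fun τ hτ ↦
            hbκ τ (uIoc_subset_uIcc hτ)
      _ ≤ κ * L := mul_le_mul_of_nonneg_left hxy hκ
  rw [← intervalIntegral.integral_add_adjacent_intervals (hb.intervalIntegrable x y)
    (hb.intervalIntegrable y t)]
  linarith [Real.le_norm_self (∫ τ in x..y, b τ)]

lemma intervalIntegral_le_of_forall_window {b : ℝ → ℝ} (hb : Continuous b) {κ L K u t : ℝ}
    (hκ : 0 ≤ κ) (hL0 : 0 ≤ L) (hL : L ≤ t - u) (hbκ : ∀ τ ∈ Icc u t, |b τ| ≤ κ)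
    (hwindow : ∀ p q : ℝ, u ≤ p → q ≤ t → L ≤ q - p → ∃ s ∈ Ioo p q, ∫ τ in s..t, b τ ≤ K)
    {x : ℝ} (hx : x ∈ Icc u t) :
    ∫ τ in x..t, b τ ≤ κ * L + K := by
  obtain ⟨p, hup, hpt, hxp⟩ := exists_window_mem hL0 hL hx
  obtain ⟨y, hy, hyK⟩ := hwindow p (p + L) hup hpt (by linarith)
  refine intervalIntegral_le_of_abs_le_of_near hb hκ (fun τ hτ ↦ hbκ τ ?_) ?_ hyK
  · exact uIcc_subset_Icc ⟨hx.1, hx.2⟩ ⟨by linarith [hy.1], by linarith [hy.2]⟩ hτ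
  · rw [abs_le]; constructor <;> linarith [hy.1, hy.2, hxp.1, hxp.2]

theorem stmt_11_general (κ M K L t : ℝ)
    (hκ : 0 ≤ κ) (hL0 : 0 < L) (hL2 : L ≤ 2 * Real.pi)
    (a b : ℝ → ℝ) (ha : Continuous a) (hb : Continuous b)
    (hbκ : ∀ τ ∈ Set.Icc (t - 2 * Real.pi) t, |b τ| ≤ κ)
    (g : ℝ → ℂ)
    (hgM : ∀ τ ∈ Set.Icc (t - 2 * Real.pi) t, ‖g τ‖ ≤ M)
    (hosc : ∀ p q : ℝ, t - 2 * Real.pi ≤ p → q ≤ t → L ≤ q - p →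
      ∃ s ∈ Set.Ioo p q, (∫ τ in s..t, b τ) ≤ K) :
    ‖∫ s in (0:ℝ)..(2 * Real.pi),
        Complex.exp (Complex.I *
          ∫ τ in t..(t - s), ((a τ : ℂ) + Complex.I * (b τ : ℂ))) * g (t - s)‖
      ≤ 2 * Real.pi * Real.exp (κ * L + K) * M := by
  have hπ : 0 ≤ 2 * Real.pi := by positivity
  have hbound : ∀ s ∈ uIoc 0 (2 * Real.pi), ‖Complex.exp (Complex.I *
      ∫ τ in t..(t - s), ((a τ : ℂ) + Complex.I * (b τ : ℂ))) * g (t - s)‖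
        ≤ Real.exp (κ * L + K) * M := by
    intro s hs
    rw [uIoc_of_le hπ] at hs
    have hts : t - s ∈ Icc (t - 2 * Real.pi) t := ⟨by linarith [hs.2], by linarith [hs.1]⟩
    have hf : Continuous fun τ ↦ (a τ : ℂ) + Complex.I * (b τ : ℂ) := by fun_prop
    rw [norm_mul, Complex.norm_exp_I_mul_intervalIntegral (hf.intervalIntegrable _ _)]
    simp only [Complex.add_im, Complex.ofReal_im, Complex.mul_im, Complex.I_re, Complex.I_im,
      Complex.ofReal_re, zero_add, zero_mul, one_mul]
    gcongr
    · exact intervalIntegral_le_of_forall_window hb hκ hL0.le (by linarith) hbκ hosc hts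
    · exact hgM _ hts
  calc _ ≤ Real.exp (κ * L + K) * M * |2 * Real.pi - 0| :=
        intervalIntegral.norm_integral_le_of_norm_le_const hbound
    _ = 2 * Real.pi * Real.exp (κ * L + K) * M := by rw [sub_zero, abs_of_nonneg hπ]; ring

/-- Key estimate for the backward integral representation: if on every open subinterval of
`[t-2π, t]` of length at least `L` the primitive of `b` comes back within `K` of its value at
`t`, then the oscillatory integral is bounded by `2π e^{κL+K} M`. -/
theorem stmt_11 (κ M K L t : ℝ)
    (hκ : 0 ≤ κ) (hM : 0 ≤ M) (hK : 0 ≤ K) (hL0 : 0 < L) (hL2 : L ≤ 2 * Real.pi)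
    (a b : ℝ → ℝ) (ha : Continuous a) (hb : Continuous b)
    (hbκ : ∀ τ ∈ Set.Icc (t - 2 * Real.pi) t, |b τ| ≤ κ)
    (g : ℝ → ℂ) (hg : Continuous g)
    (hgM : ∀ τ ∈ Set.Icc (t - 2 * Real.pi) t, ‖g τ‖ ≤ M)
    (hosc : ∀ p q : ℝ, t - 2 * Real.pi ≤ p → q ≤ t → L ≤ q - p →
      ∃ s ∈ Set.Ioo p q, (∫ τ in s..t, b τ) ≤ K) :
    ‖∫ s in (0:ℝ)..(2 * Real.pi),
        Complex.exp (Complex.I *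
          ∫ τ in t..(t - s), ((a τ : ℂ) + Complex.I * (b τ : ℂ))) * g (t - s)‖
      ≤ 2 * Real.pi * Real.exp (κ * L + K) * M :=
  stmt_11_general κ M K L t hκ hL0 hL2 a b ha hb hbκ g hgM hosc
end

section
/- Let m > 0, R ≥ 1 and let b : ℝ → ℝ be a continuous 2π-periodic function that changes sign, i.e. there exist points t₀, t₁ ∈ ℝ with b(t₀) < 0 and b(t₁) > 0. Then for every D > 0 there exists n₀ ∈ ℕ such that for every natural number n ≥ n₀: (i) there exist t ∈ ℝ and an open interval I⁺ ⊂ [t, t+2π] with |I⁺| ≥ (nR)^{-m} such that n^m ∫_s^t b(τ) dτ > D·log(nR) for every s ∈ I⁺; and (ii) there exist t' ∈ ℝ and an open interval I⁻ ⊂ [t'−2π, t'] with |I⁻| ≥ (nR)^{-m} such that n^m ∫_s^{t'} b(τ) dτ > D·log(nR) for every s ∈ I⁻. -/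
open Filter Real Set

private lemma asymp_aux (m R K D δ : ℝ) (hm : 0 < m) (hR : 1 ≤ R) (hK : 0 < K)
    (hD : 0 < D) (hδ : 0 < δ) :
    ∃ n₀ : ℕ, 1 ≤ n₀ ∧ ∀ n : ℕ, n₀ ≤ n →
      D * Real.log ((n : ℝ) * R) < (n : ℝ) ^ m * K ∧ ((n : ℝ) * R) ^ (-m) ≤ δ := by
  have hR0 : (0 : ℝ) < R := lt_of_lt_of_le one_pos hR
  -- eventually in ℝ
  have h1 : ∀ᶠ x : ℝ in atTop, D * Real.log (x * R) < x ^ m * K := by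
    have hlog : Real.log =o[atTop] fun x : ℝ => x ^ m := isLittleO_log_rpow_atTop hm
    have hb := hlog.bound (show (0:ℝ) < K / (4 * D) by positivity)
    filter_upwards [hb, eventually_ge_atTop (max R 1)] with x hx hxR
    have hx1 : (1:ℝ) ≤ x := le_trans (le_max_right _ _) hxR
    have hxRle : R ≤ x := le_trans (le_max_left _ _) hxR
    have hxm : (0:ℝ) < x ^ m := Real.rpow_pos_of_pos (lt_of_lt_of_le one_pos hx1) m
    have hlx : 0 ≤ Real.log x := Real.log_nonneg hx1
    have h2 : Real.log (x * R) ≤ 2 * Real.log x := by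
      rw [Real.log_mul (by linarith) (ne_of_gt hR0)]
      have := Real.log_le_log (by positivity) hxRle
      linarith
    have h3 : Real.log x ≤ K / (4 * D) * x ^ m := by
      have := hx
      rw [Real.norm_eq_abs, Real.norm_eq_abs, abs_of_nonneg hlx,
        abs_of_nonneg hxm.le] at this
      exact this
    have h4 : D * Real.log (x * R) ≤ D * (2 * Real.log x) :=
      mul_le_mul_of_nonneg_left h2 hD.le
    have h5 : D * (2 * Real.log x) ≤ D * (2 * (K / (4 * D) * x ^ m)) := by
      have := mul_le_mul_of_nonneg_left h3 (by norm_num : (0:ℝ) ≤ 2)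
      exact mul_le_mul_of_nonneg_left this hD.le
    have h6 : D * (2 * (K / (4 * D) * x ^ m)) = K / 2 * x ^ m := by
      field_simp; ring
    have h7 : K / 2 * x ^ m < x ^ m * K := by nlinarith
    linarith
  have h2 : ∀ᶠ x : ℝ in atTop, (x * R) ^ (-m) ≤ δ := by
    have ht : Tendsto (fun x : ℝ => (x * R) ^ (-m)) atTop (nhds 0) :=
      (tendsto_rpow_neg_atTop hm).comp (Tendsto.atTop_mul_const hR0 tendsto_id)
    exact (ht.eventually_lt_const hδ).mono fun x hx => hx.le
  have h3 : ∀ᶠ n : ℕ in atTop,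
      D * Real.log ((n : ℝ) * R) < (n : ℝ) ^ m * K ∧ ((n : ℝ) * R) ^ (-m) ≤ δ :=
    (tendsto_natCast_atTop_atTop (R := ℝ)).eventually (h1.and h2)
  obtain ⟨n₀, hn₀⟩ := eventually_atTop.mp h3
  exact ⟨max n₀ 1, le_max_right _ _, fun n hn => hn₀ n (le_trans (le_max_left _ _) hn)⟩

/-- Key lemma: part (i), needs only a point where `b` is negative. -/
private lemma neg_part (m R : ℝ) (hm : 0 < m) (hR : 1 ≤ R)
    (b : ℝ → ℝ) (hb : Continuous b) (t₀ : ℝ) (hneg : b t₀ < 0)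
    (D : ℝ) (hD : 0 < D) :
    ∃ n₀ : ℕ, ∀ n : ℕ, n₀ ≤ n →
      ∃ t : ℝ, ∃ p q : ℝ, Set.Ioo p q ⊆ Set.Icc t (t + 2 * Real.pi) ∧
        ((n : ℝ) * R) ^ (-m) ≤ q - p ∧
        ∀ s ∈ Set.Ioo p q,
          D * Real.log ((n : ℝ) * R) < (n : ℝ) ^ m * ∫ τ in s..t, b τ := by
  set c : ℝ := -b t₀ / 2 with hc
  have hc0 : 0 < c := by simp only [hc]; linarith
  -- find an interval around t₀ where b ≤ -c
  obtain ⟨δ, hδ0, hδ⟩ := Metric.continuousAt_iff.mp hb.continuousAt c hc0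
  set ε : ℝ := min (δ / 2) 1 with hε
  have hε0 : 0 < ε := lt_min (by linarith) one_pos
  have hε1 : ε ≤ 1 := min_le_right _ _
  have hbound : ∀ s ∈ Set.Icc (t₀ - ε) (t₀ + ε), b s ≤ -c := by
    intro s hs
    have hd : dist s t₀ < δ := by
      have habs : |s - t₀| ≤ ε := abs_le.mpr ⟨by linarith [hs.1], by linarith [hs.2]⟩
      rw [Real.dist_eq]
      calc |s - t₀| ≤ ε := habs
        _ ≤ δ / 2 := min_le_left _ _
        _ < δ := by linarith
    have := hδ hd
    rw [Real.dist_eq, abs_lt] at this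
    have : b s - b t₀ < c := this.2
    simp only [hc] at *
    linarith
  obtain ⟨n₀, hn₀1, hn₀⟩ := asymp_aux m R (c * ε) D ε hm hR (by positivity) hD hε0
  refine ⟨n₀, fun n hn => ?_⟩
  obtain ⟨h1, h2⟩ := hn₀ n hn
  refine ⟨t₀ - ε, t₀, t₀ + ε, ?_, by simpa using h2, ?_⟩
  · intro s hs
    have hπ : (1:ℝ) < Real.pi := by linarith [Real.pi_gt_three]
    constructor <;> [skip; skip] <;> · obtain ⟨hs1, hs2⟩ := hs; nlinarith
  · intro s hs
    obtain ⟨hs1, hs2⟩ := hs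
    have hts : t₀ - ε ≤ s := by linarith
    -- ∫ (t₀-ε)..s b ≤ -c * (s - (t₀-ε))
    have hint : ∫ τ in (t₀ - ε)..s, b τ ≤ ∫ τ in (t₀ - ε)..s, (-c) := by
      apply intervalIntegral.integral_mono_on hts
        (hb.intervalIntegrable _ _) (intervalIntegrable_const)
      intro x hx
      exact hbound x ⟨hx.1, by linarith [hx.2]⟩
    rw [intervalIntegral.integral_const, smul_eq_mul] at hint
    have hkey : c * ε ≤ ∫ τ in s..(t₀ - ε), b τ := by
      rw [intervalIntegral.integral_symm]
      have : (s - (t₀ - ε)) * (-c) ≤ -(c * ε) := by nlinarith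
      linarith
    have hnm : (0:ℝ) < (n : ℝ) ^ m := by
      have hn1 : (1:ℝ) ≤ (n : ℝ) := by
        exact_mod_cast le_trans hn₀1 hn
      exact Real.rpow_pos_of_pos (by linarith) m
    calc D * Real.log ((n : ℝ) * R) < (n : ℝ) ^ m * (c * ε) := h1
      _ ≤ (n : ℝ) ^ m * ∫ τ in s..(t₀ - ε), b τ :=
        mul_le_mul_of_nonneg_left hkey hnm.le

/-- For a sign-changing continuous periodic `b` and a positively homogeneous symbol
`n^m b(t)` at frequencies of size `nR`, both conditions `(α)_D^+` and `(α)_D^-` fail for all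
large `n`. -/
theorem stmt_13 (m R : ℝ) (hm : 0 < m) (hR : 1 ≤ R)
    (b : ℝ → ℝ) (hb : Continuous b) (hbp : Function.Periodic b (2 * Real.pi))
    (t₀ t₁ : ℝ) (hneg : b t₀ < 0) (hpos : 0 < b t₁) :
    ∀ D : ℝ, 0 < D → ∃ n₀ : ℕ, ∀ n : ℕ, n₀ ≤ n →
      (∃ t : ℝ, ∃ p q : ℝ, Set.Ioo p q ⊆ Set.Icc t (t + 2 * Real.pi) ∧
        ((n : ℝ) * R) ^ (-m) ≤ q - p ∧
        ∀ s ∈ Set.Ioo p q,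
          D * Real.log ((n : ℝ) * R) < (n : ℝ) ^ m * ∫ τ in s..t, b τ) ∧
      (∃ t' : ℝ, ∃ p q : ℝ, Set.Ioo p q ⊆ Set.Icc (t' - 2 * Real.pi) t' ∧
        ((n : ℝ) * R) ^ (-m) ≤ q - p ∧
        ∀ s ∈ Set.Ioo p q,
          D * Real.log ((n : ℝ) * R) < (n : ℝ) ^ m * ∫ τ in s..t', b τ) := by
  intro D hD
  obtain ⟨n₁, hn₁⟩ := neg_part m R hm hR b hb t₀ hneg D hD
  -- for part (ii), apply `neg_part` to `τ ↦ -b (-τ)`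
  have hb' : Continuous fun τ => -b (-τ) := (hb.comp continuous_neg).neg
  have hneg' : (fun τ => -b (-τ)) (-t₁) < 0 := by simpa using hpos
  obtain ⟨n₂, hn₂⟩ := neg_part m R hm hR (fun τ => -b (-τ)) hb' (-t₁) hneg' D hD
  refine ⟨max n₁ n₂, fun n hn => ⟨hn₁ n (le_trans (le_max_left _ _) hn), ?_⟩⟩
  obtain ⟨t, p, q, hsub, hlen, hval⟩ := hn₂ n (le_trans (le_max_right _ _) hn)
  refine ⟨-t, -q, -p, ?_, by linarith, ?_⟩
  · intro s hs
    have : -s ∈ Set.Ioo p q := ⟨by linarith [hs.2], by linarith [hs.1]⟩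
    have h := hsub this
    exact ⟨by linarith [h.2], by linarith [h.1]⟩
  · intro s hs
    have hmem : -s ∈ Set.Ioo p q := ⟨by linarith [hs.2], by linarith [hs.1]⟩
    have h := hval (-s) hmem
    have heq : (∫ τ in (-s)..t, -b (-τ)) = ∫ τ in s..(-t), b τ := by
      rw [intervalIntegral.integral_neg, intervalIntegral.integral_comp_neg]
      rw [intervalIntegral.integral_symm]
      simp
    rwa [heq] at h
end

section
/- Let m > m' be real numbers with m > 0, let c > 0, R ≥ 1, and let b : ℝ → ℝ be a continuous 2π-periodic function that changes sign (there exist t₀, t₁ with b(t₀) < 0 and b(t₁) > 0). For each n ∈ ℕ let β_n : ℝ → ℝ be a continuous function with |β_n(t)| ≤ c·n^{m'} for all t ∈ ℝ. Then for every D > 0 there exists n₀ ∈ ℕ such that for every natural number n ≥ n₀: (i) there exist t ∈ ℝ and an open interval I⁺ ⊂ [t, t+2π] with |I⁺| ≥ (nR)^{-m} such that ∫_s^t (n^m b(τ) + β_n(τ)) dτ > D·log(nR) for every s ∈ I⁺; and (ii) there exist t' ∈ ℝ and an open interval I⁻ ⊂ [t'−2π, t'] with |I⁻| ≥ (nR)^{-m}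 such that ∫_s^{t'} (n^m b(τ) + β_n(τ)) dτ > D·log(nR) for every s ∈ I⁻. -/
/-!
Near a point `t₁` with `b t₁ > 0` continuity gives `b ≥ ε > 0` on some `(l, t₁]`. For `s` in the
left half of that interval, `∫_s^{t₁} (n^m b + β_n) ≥ (t₁ - l)/2 · (ε n^m - c n^{m'})`, and since
`n^{m'}` and `log n` are `o(n^m)` this exceeds `D log(nR)` for large `n`, while the half length
stays above `(nR)^{-m} → 0`. Part (i) is part (ii) for the reflected data `u ↦ -b(-u)`,
`u ↦ -β_n(-u)` at `-t₀`, where `b t₀ < 0`.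
-/

open Filter Real Set Asymptotics

theorem tendsto_mul_rpow_sub_mul_rpow_sub_mul_log_atTop {m m' : ℝ} (hm : 0 < m) (hmm' : m' < m)
    {a : ℝ} (ha : 0 < a) (c d : ℝ) :
    Tendsto (fun x : ℝ => a * x ^ m - c * x ^ m' - d * log x) atTop atTop := by
  have hpow : (fun x : ℝ => x ^ m') =o[atTop] fun x => x ^ m := by
    refine (isLittleO_iff_tendsto' ?_).2 ?_
    · filter_upwards [eventually_gt_atTop 0] with x hx hxm
      exact absurd hxm (rpow_pos_of_pos hx m).ne'
    · refine (tendsto_rpow_neg_atTop (sub_pos.2 hmm')).congr' ?_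
      filter_upwards [eventually_gt_atTop 0] with x hx
      rw [← rpow_sub hx, neg_sub]
  have hlower : (fun x : ℝ => c * x ^ m' + d * log x) =o[atTop] fun x => a * x ^ m :=
    ((hpow.const_mul_left c).add ((isLittleO_log_rpow_atTop hm).const_mul_left d)).const_mul_right
      ha.ne'
  have hequiv : (fun x : ℝ => a * x ^ m - c * x ^ m' - d * log x) ~[atTop] fun x => a * x ^ m := by
    refine IsLittleO.isEquivalent (hlower.neg_left.congr_left fun x => ?_)
    simp only [Pi.sub_apply]
    ring
  exact hequiv.symm.tendsto_atTop ((tendsto_rpow_atTop hm).const_mul_atTop ha)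

theorem mul_sub_le_intervalIntegral_of_le {f : ℝ → ℝ} {s t K : ℝ} (hst : s ≤ t)
    (hf : IntervalIntegrable f MeasureTheory.volume s t) (hK : ∀ τ ∈ Icc s t, K ≤ f τ) :
    K * (t - s) ≤ ∫ τ in s..t, f τ := by
  simpa [mul_comm] using intervalIntegral.integral_mono_on hst intervalIntegrable_const hf hK

theorem exists_Ioo_lt_integral_of_comp_neg {b g : ℝ → ℝ} {x L A t : ℝ}
    (h : ∃ p q : ℝ, Ioo p q ⊆ Icc (-t - 2 * π) (-t) ∧ L ≤ q - p ∧
      ∀ s ∈ Ioo p q, A < ∫ τ in s..-t, (x * -b (-τ) + -g (-τ))) :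
    ∃ p q : ℝ, Ioo p q ⊆ Icc t (t + 2 * π) ∧ L ≤ q - p ∧
      ∀ s ∈ Ioo p q, A < ∫ τ in s..t, (x * b τ + g τ) := by
  obtain ⟨p, q, hsub, hlen, hA⟩ := h
  refine ⟨-q, -p, fun y hy => ?_, by linarith, fun s hs => ?_⟩
  · obtain ⟨h₁, h₂⟩ := hsub (show -y ∈ Ioo p q from ⟨by linarith [hy.2], by linarith [hy.1]⟩)
    exact ⟨by linarith, by linarith⟩
  · have hrefl : ∫ τ in -s..-t, (x * -b (-τ) + -g (-τ)) = ∫ τ in s..t, (x * b τ + g τ) := by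
      simp only [mul_neg, ← neg_add, intervalIntegral.integral_comp_neg
        (fun τ => -(x * b τ + g τ)), neg_neg, intervalIntegral.integral_neg,
        intervalIntegral.integral_symm s t]
    exact hrefl ▸ hA (-s) ⟨by linarith [hs.2], by linarith [hs.1]⟩

theorem eventually_exists_Ioo_log_lt_integral {m m' c R D : ℝ} (hm : 0 < m) (hmm' : m' < m)
    (hR : 0 < R) {b : ℝ → ℝ} (hb : Continuous b) {t : ℝ} (hbt : 0 < b t)
    {β : ℕ → ℝ → ℝ} (hβc : ∀ n, Continuous (β n)) (hβ : ∀ n τ, |β n τ| ≤ c * (n : ℝ) ^ m') :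
    ∀ᶠ n : ℕ in atTop, ∃ p q : ℝ, Ioo p q ⊆ Icc (t - 2 * π) t ∧ ((n : ℝ) * R) ^ (-m) ≤ q - p ∧
      ∀ s ∈ Ioo p q, D * log ((n : ℝ) * R) < ∫ τ in s..t, ((n : ℝ) ^ m * b τ + β n τ) := by
  set ε := b t / 2
  obtain ⟨l, ⟨hl, hlt⟩, hbl⟩ : ∃ l ∈ Ico (t - 2 * π) t, Ioc l t ⊆ {τ | ε < b τ} :=
    exists_Ioc_subset_of_mem_nhds'
      (hb.continuousAt.preimage_mem_nhds (Ioi_mem_nhds (half_lt_self hbt))) (by linarith [pi_pos])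
  set δ := (t - l) / 2 with hδ_def
  have hδ : 0 < δ := by positivity
  have hshort : ∀ᶠ x : ℝ in atTop, (x * R) ^ (-m) < δ :=
    ((tendsto_rpow_neg_atTop hm).comp (tendsto_id.atTop_mul_const hR)).eventually_lt_const hδ
  have hK : ∀ᶠ x : ℝ in atTop, 0 ≤ ε * x ^ m - c * x ^ m' := by
    simpa using (tendsto_mul_rpow_sub_mul_rpow_sub_mul_log_atTop hm hmm' (half_pos hbt) c 0
      |>.eventually_ge_atTop 0)
  have hlog : ∀ᶠ x : ℝ in atTop, D * log R < δ * ε * x ^ m - δ * c * x ^ m' - D * log x :=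
    (tendsto_mul_rpow_sub_mul_rpow_sub_mul_log_atTop hm hmm' (by positivity) _ D
      |>.eventually_gt_atTop _)
  filter_upwards [tendsto_natCast_atTop_atTop.eventually
    ((eventually_gt_atTop 0).and (hshort.and (hK.and hlog)))] with n ⟨hn, hshort, hK, hlog⟩
  refine ⟨l, l + δ, fun y hy => ⟨by linarith [hy.1], by linarith [hy.2]⟩, by linarith,
    fun s hs => ?_⟩
  calc D * log (n * R) < δ * (ε * (n : ℝ) ^ m - c * (n : ℝ) ^ m') := by
        rw [log_mul hn.ne' hR.ne']; linarith
    _ ≤ (ε * (n : ℝ) ^ m - c * (n : ℝ) ^ m') * (t - s) := by nlinarith [hs.2]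
    _ ≤ ∫ τ in s..t, ((n : ℝ) ^ m * b τ + β n τ) := by
        refine mul_sub_le_intervalIntegral_of_le (by linarith [hs.2])
          (((continuous_const.mul hb).add (hβc n)).intervalIntegrable _ _) fun τ hτ => ?_
        have hbτ : ε ≤ b τ := (hbl ⟨hs.1.trans_le hτ.1, hτ.2⟩).le
        have := mul_le_mul_of_nonneg_left hbτ (rpow_nonneg hn.le m)
        linarith [(abs_le.1 (hβ n τ)).1]

theorem stmt_14_general (m m' c R : ℝ) (hm : 0 < m) (hmm' : m' < m) (hR : 1 ≤ R)
    (b : ℝ → ℝ) (hb : Continuous b)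
    (t₀ t₁ : ℝ) (hneg : b t₀ < 0) (hpos : 0 < b t₁)
    (β : ℕ → ℝ → ℝ) (hβc : ∀ n : ℕ, Continuous (β n))
    (hβ : ∀ n : ℕ, ∀ t : ℝ, |β n t| ≤ c * (n : ℝ) ^ m') :
    ∀ D : ℝ, 0 < D → ∃ n₀ : ℕ, ∀ n : ℕ, n₀ ≤ n →
      (∃ t : ℝ, ∃ p q : ℝ, Set.Ioo p q ⊆ Set.Icc t (t + 2 * Real.pi) ∧
        ((n : ℝ) * R) ^ (-m) ≤ q - p ∧
        ∀ s ∈ Set.Ioo p q,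
          D * Real.log ((n : ℝ) * R) <
            ∫ τ in s..t, ((n : ℝ) ^ m * b τ + β n τ)) ∧
      (∃ t' : ℝ, ∃ p q : ℝ, Set.Ioo p q ⊆ Set.Icc (t' - 2 * Real.pi) t' ∧
        ((n : ℝ) * R) ^ (-m) ≤ q - p ∧
        ∀ s ∈ Set.Ioo p q,
          D * Real.log ((n : ℝ) * R) <
            ∫ τ in s..t', ((n : ℝ) ^ m * b τ + β n τ)) := by
  intro D _
  have hR₀ : 0 < R := by linarith
  have hreflected := eventually_exists_Ioo_log_lt_integral (D := D) hm hmm' hR₀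
    (b := fun u => -b (-u)) (by fun_prop) (t := -t₀) (by simpa using hneg)
    (β := fun n u => -β n (-u)) (fun n => by fun_prop) (fun n u => by simpa using hβ n (-u))
  have hdirect := eventually_exists_Ioo_log_lt_integral (D := D) hm hmm' hR₀ hb hpos hβc hβ
  obtain ⟨n₀, hn₀⟩ := eventually_atTop.1 (hreflected.and hdirect)
  exact ⟨n₀, fun n hn =>
    ⟨⟨t₀, exists_Ioo_lt_integral_of_comp_neg (hn₀ n hn).1⟩, ⟨t₁, (hn₀ n hn).2⟩⟩⟩

/-- For a symbol of order `m` with sign-changing positively homogeneous principal part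
`n^m b(t)` and lower-order perturbations `β_n` of order `m' < m`, both conditions `(α)_D^+`
and `(α)_D^-` fail at frequencies of size `nR` for all large `n`. -/
theorem stmt_14 (m m' c R : ℝ) (hm : 0 < m) (hmm' : m' < m) (hc : 0 < c) (hR : 1 ≤ R)
    (b : ℝ → ℝ) (hb : Continuous b) (hbp : Function.Periodic b (2 * Real.pi))
    (t₀ t₁ : ℝ) (hneg : b t₀ < 0) (hpos : 0 < b t₁)
    (β : ℕ → ℝ → ℝ) (hβc : ∀ n : ℕ, Continuous (β n))
    (hβ : ∀ n : ℕ, ∀ t : ℝ, |β n t| ≤ c * (n : ℝ) ^ m') :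
    ∀ D : ℝ, 0 < D → ∃ n₀ : ℕ, ∀ n : ℕ, n₀ ≤ n →
      (∃ t : ℝ, ∃ p q : ℝ, Set.Ioo p q ⊆ Set.Icc t (t + 2 * Real.pi) ∧
        ((n : ℝ) * R) ^ (-m) ≤ q - p ∧
        ∀ s ∈ Set.Ioo p q,
          D * Real.log ((n : ℝ) * R) <
            ∫ τ in s..t, ((n : ℝ) ^ m * b τ + β n τ)) ∧
      (∃ t' : ℝ, ∃ p q : ℝ, Set.Ioo p q ⊆ Set.Icc (t' - 2 * Real.pi) t' ∧
        ((n : ℝ) * R) ^ (-m) ≤ q - p ∧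
        ∀ s ∈ Set.Ioo p q,
          D * Real.log ((n : ℝ) * R) <
            ∫ τ in s..t', ((n : ℝ) ^ m * b τ + β n τ)) :=
  stmt_14_general m m' c R hm hmm' hR b hb t₀ t₁ hneg hpos β hβc hβ
end

section
/- Let m > 0, R ≥ 1 and let B : ℝ → ℝ be a continuous 2π-periodic function; let t_* ∈ [0, 2π) be a point where B attains its maximum over ℝ. Suppose there exists λ ∈ ℝ such that the set {t ∈ (t_*, t_* + 2π) : B(t) < λ} is not an interval (i.e. is not preconnected in ℝ). Then for every D > 0 there exists n₀ ∈ ℕ such that for every natural number n ≥ n₀ there exist t ∈ (t_*, t_* + 2π) and open intervals I⁻ ⊂ [t_*, t] and I⁺ ⊂ [t, t_* + 2π], each of length at least (nR)^{-m}, such that n^m (B(t) − B(s)) > D·log(nR) for every s ∈ I⁻ ∪ I⁺. -/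
open Filter Asymptotics

/-- If a sublevel set of a continuous periodic primitive `B` is disconnected, then the
condition `(β)_D` fails for the rescaled primitive `n^m B` at frequencies of size `nR`
for all large `n`. -/
theorem stmt_15 (m R : ℝ) (hm : 0 < m) (hR : 1 ≤ R)
    (B : ℝ → ℝ) (hB : Continuous B) (hBp : Function.Periodic B (2 * Real.pi))
    (tstar : ℝ) (htstar : tstar ∈ Set.Ico 0 (2 * Real.pi))
    (hmax : ∀ s : ℝ, B s ≤ B tstar)
    (hdisc : ∃ lam : ℝ,
      ¬ IsPreconnected {t : ℝ | t ∈ Set.Ioo tstar (tstar + 2 * Real.pi) ∧ B t < lam}) :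
    ∀ D : ℝ, 0 < D → ∃ n₀ : ℕ, ∀ n : ℕ, n₀ ≤ n →
      ∃ t ∈ Set.Ioo tstar (tstar + 2 * Real.pi), ∃ p q p' q' : ℝ,
        Set.Ioo p q ⊆ Set.Icc tstar t ∧ ((n : ℝ) * R) ^ (-m) ≤ q - p ∧
        Set.Ioo p' q' ⊆ Set.Icc t (tstar + 2 * Real.pi) ∧ ((n : ℝ) * R) ^ (-m) ≤ q' - p' ∧
        ∀ s ∈ Set.Ioo p q ∪ Set.Ioo p' q',
          D * Real.log ((n : ℝ) * R) < (n : ℝ) ^ m * (B t - B s) := by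
  intro D hD
  obtain ⟨lam, hlam⟩ := hdisc
  rw [isPreconnected_iff_ordConnected, Set.ordConnected_iff] at hlam
  push_neg at hlam
  obtain ⟨a, ha, b, hb, hab, hsub⟩ := hlam
  rw [Set.not_subset] at hsub
  obtain ⟨c, hcI, hcs⟩ := hsub
  simp only [Set.mem_setOf_eq] at ha hb hcs
  have hac : a < c := lt_of_le_of_ne hcI.1 (by rintro rfl; exact hcs ha)
  have hcb : c < b := lt_of_le_of_ne hcI.2 (by rintro rfl; exact hcs hb)
  have hcIoo : c ∈ Set.Ioo tstar (tstar + 2 * Real.pi) :=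
    ⟨lt_trans ha.1.1 hac, lt_trans hcb hb.1.2⟩
  have hBc : lam ≤ B c := by
    by_contra h
    exact hcs ⟨hcIoo, lt_of_not_ge h⟩
  -- continuity: small intervals around a and b where B is well below lam
  have key : ∀ x lo hi : ℝ, lo < x → x < hi → B x < lam →
      ∃ η > 0, Set.Ioo (x - η) (x + η) ⊆ Set.Ioo lo hi ∧
        ∀ s ∈ Set.Ioo (x - η) (x + η), B s < (B x + lam) / 2 := by
    intro x lo hi hlo hhi hBx
    have hV : IsOpen (Set.Ioo lo hi ∩ B ⁻¹' Set.Iio ((B x + lam) / 2)) :=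
      isOpen_Ioo.inter (isOpen_Iio.preimage hB)
    have hxV : x ∈ Set.Ioo lo hi ∩ B ⁻¹' Set.Iio ((B x + lam) / 2) :=
      ⟨⟨hlo, hhi⟩, by simp only [Set.mem_preimage, Set.mem_Iio]; linarith⟩
    obtain ⟨η, hη, hball⟩ := Metric.mem_nhds_iff.mp (hV.mem_nhds hxV)
    rw [Real.ball_eq_Ioo] at hball
    exact ⟨η, hη, fun s hs => (hball hs).1, fun s hs => (hball hs).2⟩
  obtain ⟨η₁, hη₁, hsub₁, hB₁⟩ := key a tstar c ha.1.1 hac ha.2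
  obtain ⟨η₂, hη₂, hsub₂, hB₂⟩ := key b c (tstar + 2 * Real.pi) hcb hb.1.2 hb.2
  set ε : ℝ := min ((lam - B a) / 2) ((lam - B b) / 2) with hεdef
  have hε : 0 < ε := lt_min (by linarith [ha.2]) (by linarith [hb.2])
  set L : ℝ := min (2 * η₁) (2 * η₂) with hLdef
  have hL : 0 < L := lt_min (by linarith) (by linarith)
  have hR0 : (0 : ℝ) < R := lt_of_lt_of_le one_pos hR
  -- little-o estimate
  have hlO : (fun x : ℝ => D * Real.log (x * R)) =o[atTop] fun x : ℝ => x ^ m := by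
    have h1 : (fun x : ℝ => D * Real.log x + D * Real.log R) =o[atTop]
        fun x : ℝ => x ^ m := by
      refine (((isLittleO_log_rpow_atTop hm).const_mul_left D)).add ?_
      rw [Asymptotics.isLittleO_const_left]
      right
      exact tendsto_abs_atTop_atTop.comp (tendsto_rpow_atTop hm)
    refine h1.congr' ?_ (Filter.EventuallyEq.refl _ _)
    filter_upwards [eventually_gt_atTop (0 : ℝ)] with x hx
    rw [Real.log_mul hx.ne' hR0.ne']
    ring
  have E1 : ∀ᶠ x : ℝ in atTop, D * Real.log (x * R) < x ^ m * ε := by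
    filter_upwards [hlO.def (half_pos hε), eventually_ge_atTop (1 : ℝ)] with x hx hx1
    have hxm : 0 < x ^ m := Real.rpow_pos_of_pos (by linarith) m
    have h2 : D * Real.log (x * R) ≤ ε / 2 * x ^ m := by
      calc D * Real.log (x * R) ≤ ‖D * Real.log (x * R)‖ := le_abs_self _
        _ ≤ ε / 2 * ‖x ^ m‖ := hx
        _ = ε / 2 * x ^ m := by rw [Real.norm_eq_abs, abs_of_pos hxm]
    nlinarith
  have E2 : ∀ᶠ x : ℝ in atTop, (x * R) ^ (-m) ≤ L := by
    have hmul : Tendsto (fun x : ℝ => x * R) atTop atTop :=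
      tendsto_id.atTop_mul_const hR0
    have h0 : Tendsto (fun x : ℝ => (x * R) ^ (-m)) atTop (nhds 0) :=
      (tendsto_rpow_neg_atTop hm).comp hmul
    filter_upwards [h0.eventually_lt_const hL] with x hx using hx.le
  have Eℕ : ∀ᶠ n : ℕ in atTop,
      (D * Real.log ((n : ℝ) * R) < (n : ℝ) ^ m * ε ∧ ((n : ℝ) * R) ^ (-m) ≤ L) ∧
        1 ≤ n := by
    refine (tendsto_natCast_atTop_atTop.eventually (E1.and E2)).and (eventually_ge_atTop 1)
  obtain ⟨n₀, hn₀⟩ := eventually_atTop.mp Eℕ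
  refine ⟨n₀, fun n hn => ?_⟩
  obtain ⟨⟨hE1, hE2⟩, hn1⟩ := hn₀ n hn
  have hnm : 0 < (n : ℝ) ^ m :=
    Real.rpow_pos_of_pos (by exact_mod_cast Nat.lt_of_lt_of_le Nat.zero_lt_one hn1) m
  refine ⟨c, hcIoo, a - η₁, a + η₁, b - η₂, b + η₂, ?_, ?_, ?_, ?_, ?_⟩
  · exact fun s hs => Set.Ioo_subset_Icc_self (hsub₁ hs)
  · calc ((n : ℝ) * R) ^ (-m) ≤ L := hE2
      _ ≤ 2 * η₁ := min_le_left _ _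
      _ = a + η₁ - (a - η₁) := by ring
  · exact fun s hs => Set.Ioo_subset_Icc_self (hsub₂ hs)
  · calc ((n : ℝ) * R) ^ (-m) ≤ L := hE2
      _ ≤ 2 * η₂ := min_le_right _ _
      _ = b + η₂ - (b - η₂) := by ring
  · intro s hs
    have hBs : ε < B c - B s := by
      rcases hs with hs | hs
      · have := hB₁ s hs
        have := min_le_left ((lam - B a) / 2) ((lam - B b) / 2)
        simp only [hεdef]
        linarith
      · have := hB₂ s hs
        have := min_le_right ((lam - B a) / 2) ((lam - B b) / 2)
        simp only [hεdef]
        linarith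
    calc D * Real.log ((n : ℝ) * R) < (n : ℝ) ^ m * ε := hE1
      _ < (n : ℝ) ^ m * (B c - B s) := by exact (mul_lt_mul_iff_right₀ hnm).mpr hBs
end
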